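/- arXiv:1304.1222 — 2 statements merged into one kernel-verified Lean document; each statement's English description precedes it below -/
import Mathlib

section
/- Kantorovich bound for steepest descent: Let A be Hermitian positive definite with smallest and largest eigenvalues λ_min and λ_max, let x⋆ = A^{-1} y, and given t ≠ x⋆ let z = y − A t and x = t + h z with optimal step h = (z,z)/(z,Az). Then ‖x⋆ − x‖_A ≤ Ω(A) ‖x⋆ − t‖_A where Ω(A) = (λ_max − λ_min)/(λ_max + λ_min) < 1. -/
/-!
Put `e = x⋆ - t`; then the residual is `z = A e` and `x⋆ - x = e - h z`. The optimal step `h`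
minimises the quadratic `s ↦ ‖e - s z‖²_A`, so it does at least as well as the fixed step
`s = 2 / (λ_min + λ_max)`. For that step
`Ω² ‖e‖²_A - ‖e - s z‖²_A = s² e* A (A - λ_min) (λ_max - A) e`,
which is nonnegative because the three factors are commuting positive semidefinite matrices.
-/
open Matrix
open scoped ComplexOrder MatrixOrder

namespace Matrix

variable {ι : Type*} [Fintype ι]

lemma IsHermitian.star_dotProduct_mulVec {A : Matrix ι ι ℂ} (hA : A.IsHermitian) (v w : ι → ℂ) :
    star v ⬝ᵥ A *ᵥ w = star (A *ᵥ v) ⬝ᵥ w := by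
  rw [star_mulVec, hA.eq, dotProduct_mulVec]

lemma IsHermitian.ofReal_re_dotProduct_mulVec {A : Matrix ι ι ℂ} (hA : A.IsHermitian)
    (v : ι → ℂ) : (((star v ⬝ᵥ A *ᵥ v).re : ℝ) : ℂ) = star v ⬝ᵥ A *ᵥ v :=
  Complex.ext rfl (by simpa using (hA.im_star_dotProduct_mulVec_self v).symm)

lemma IsHermitian.re_dotProduct_sub_smul_mulVec {A : Matrix ι ι ℂ} (hA : A.IsHermitian)
    (e : ι → ℂ) (c : ℝ) :
    (star (e - (c : ℂ) • A *ᵥ e) ⬝ᵥ A *ᵥ (e - (c : ℂ) • A *ᵥ e)).re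
      = (star e ⬝ᵥ A *ᵥ e).re - 2 * c * (star (A *ᵥ e) ⬝ᵥ A *ᵥ e).re
        + c ^ 2 * (star (A *ᵥ e) ⬝ᵥ A *ᵥ (A *ᵥ e)).re := by
  simp only [star_sub, star_smul, mulVec_sub, mulVec_smul, sub_dotProduct, dotProduct_sub,
    smul_dotProduct, dotProduct_smul, hA.star_dotProduct_mulVec e (A *ᵥ e), Complex.star_def,
    Complex.conj_ofReal, smul_eq_mul, Complex.sub_re, Complex.re_ofReal_mul]
  ring

variable [DecidableEq ι]

lemma posSemidef_sub_smul_one {A : Matrix ι ι ℂ} (hA : A.IsHermitian) {a : ℝ}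
    (h : ∀ v : ι → ℂ, a * (star v ⬝ᵥ v).re ≤ (star v ⬝ᵥ A *ᵥ v).re) :
    (A - a • (1 : Matrix ι ι ℂ)).PosSemidef := by
  have hM : (A - a • (1 : Matrix ι ι ℂ)).IsHermitian := hA.sub (isHermitian_one.smul (.all a))
  refine .of_dotProduct_mulVec_nonneg hM fun v => Complex.nonneg_iff.mpr ⟨?_, ?_⟩
  · simpa [sub_mulVec, smul_mulVec, sub_nonneg] using h v
  · exact (hM.im_star_dotProduct_mulVec_self v).symm

lemma posSemidef_smul_one_sub {A : Matrix ι ι ℂ} (hA : A.IsHermitian) {b : ℝ}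
    (h : ∀ v : ι → ℂ, (star v ⬝ᵥ A *ᵥ v).re ≤ b * (star v ⬝ᵥ v).re) :
    (b • (1 : Matrix ι ι ℂ) - A).PosSemidef := by
  have hM : (b • (1 : Matrix ι ι ℂ) - A).IsHermitian := (isHermitian_one.smul (.all b)).sub hA
  refine .of_dotProduct_mulVec_nonneg hM fun v => Complex.nonneg_iff.mpr ⟨?_, ?_⟩
  · simpa [sub_mulVec, smul_mulVec, sub_nonneg] using h v
  · exact (hM.im_star_dotProduct_mulVec_self v).symm

lemma PosSemidef.kantorovich_moment_le {A : Matrix ι ι ℂ} (hA : A.PosSemidef) {a b : ℝ}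
    (hlow : ∀ v : ι → ℂ, a * (star v ⬝ᵥ v).re ≤ (star v ⬝ᵥ A *ᵥ v).re)
    (hhigh : ∀ v : ι → ℂ, (star v ⬝ᵥ A *ᵥ v).re ≤ b * (star v ⬝ᵥ v).re) (e : ι → ℂ) :
    a * b * (star e ⬝ᵥ A *ᵥ e).re + (star (A *ᵥ e) ⬝ᵥ A *ᵥ (A *ᵥ e)).re
      ≤ (a + b) * (star (A *ᵥ e) ⬝ᵥ A *ᵥ e).re := by
  have hcommA : ∀ c : ℝ, Commute (c • (1 : Matrix ι ι ℂ)) A :=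
    fun c => (Commute.one_left A).smul_left c
  have hlowA : Commute (A - a • 1) A := (Commute.refl A).sub_left (hcommA a)
  have hhighA : Commute (b • 1 - A) A := (hcommA b).sub_left (Commute.refl A)
  have hP : 0 ≤ (A - a • 1) * ((b • 1 - A) * A) :=
    Commute.mul_nonneg (posSemidef_sub_smul_one hA.1 hlow).nonneg
      (hhighA.mul_nonneg (posSemidef_smul_one_sub hA.1 hhigh).nonneg hA.nonneg)
      (((hcommA b).symm.sub_left ((Commute.one_left _).smul_left a)).sub_right hlowA
        |>.mul_right hlowA)
  have hexpand : (A - a • 1) * ((b • 1 - A) * A)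
      = (a + b) • (A * A) - A * (A * A) - (a * b) • A := by
    simp only [mul_sub, sub_mul, smul_mul_assoc, mul_smul_comm, one_mul]
    module
  have hsq : star e ⬝ᵥ (A * A) *ᵥ e = star (A *ᵥ e) ⬝ᵥ A *ᵥ e := by
    rw [← mulVec_mulVec, hA.1.star_dotProduct_mulVec]
  have hcube : star e ⬝ᵥ (A * (A * A)) *ᵥ e = star (A *ᵥ e) ⬝ᵥ A *ᵥ (A *ᵥ e) := by
    rw [← mulVec_mulVec, ← mulVec_mulVec, hA.1.star_dotProduct_mulVec]
  have hform := hP.posSemidef.re_dotProduct_nonneg e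
  change 0 ≤ Complex.re _ at hform
  rw [hexpand] at hform
  simp only [sub_mulVec, smul_mulVec, dotProduct_sub, dotProduct_smul, hsq, hcube,
    Complex.sub_re, Complex.smul_re, smul_eq_mul] at hform
  linarith

end Matrix

lemma quadratic_at_div_le {α β γ : ℝ} (hγ : 0 ≤ γ) (hβ : γ = 0 → β = 0) (s : ℝ) :
    α - 2 * (β / γ) * β + (β / γ) ^ 2 * γ ≤ α - 2 * s * β + s ^ 2 * γ := by
  rcases hγ.eq_or_lt with hγ0 | hγpos
  · simp [← hγ0, hβ hγ0.symm]
  · have hgap : (α - 2 * s * β + s ^ 2 * γ) - (α - 2 * (β / γ) * β + (β / γ) ^ 2 * γ)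
        = γ * (s - β / γ) ^ 2 := by
      field_simp
      ring
    rw [← sub_nonneg, hgap]
    exact mul_nonneg hγpos.le (sq_nonneg _)

lemma quadratic_at_two_div_add_le {a b α β γ : ℝ} (hab : 0 < a + b)
    (hkey : a * b * α + γ ≤ (a + b) * β) :
    α - 2 * (2 / (a + b)) * β + (2 / (a + b)) ^ 2 * γ ≤ ((b - a) / (a + b)) ^ 2 * α := by
  have hgap : ((b - a) / (a + b)) ^ 2 * α - (α - 2 * (2 / (a + b)) * β + (2 / (a + b)) ^ 2 * γ)
      = (2 / (a + b)) ^ 2 * ((a + b) * β - a * b * α - γ) := by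
    field_simp
    ring
  rw [← sub_nonneg, hgap]
  exact mul_nonneg (sq_nonneg _) (by linarith)

theorem steepest_descent_kantorovich_general
    (n : ℕ) (A : Matrix (Fin n) (Fin n) ℂ)
    (hA : A.PosDef)
    (lmin lmax : ℝ) (hlmin : 0 < lmin) (hle : lmin ≤ lmax)
    (hlow : ∀ v : Fin n → ℂ, lmin * (star v ⬝ᵥ v).re ≤ (star v ⬝ᵥ A *ᵥ v).re)
    (hhigh : ∀ v : Fin n → ℂ, (star v ⬝ᵥ A *ᵥ v).re ≤ lmax * (star v ⬝ᵥ v).re)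
    (y xstar t : Fin n → ℂ)
    (hxstar : A *ᵥ xstar = y) :
    let z := y - A *ᵥ t
    let h := (star z ⬝ᵥ z) / (star z ⬝ᵥ A *ᵥ z)
    let x := t + h • z
    Real.sqrt (star (xstar - x) ⬝ᵥ A *ᵥ (xstar - x)).re
      ≤ (lmax - lmin) / (lmax + lmin)
        * Real.sqrt (star (xstar - t) ⬝ᵥ A *ᵥ (xstar - t)).re ∧
    (lmax - lmin) / (lmax + lmin) < 1 := by
  intro z h x
  set e := xstar - t
  have hz : z = A *ᵥ e := by simp only [z, e, mulVec_sub, hxstar]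
  set β := (star z ⬝ᵥ z).re
  set γ := (star z ⬝ᵥ A *ᵥ z).re
  have hβreal : (β : ℂ) = star z ⬝ᵥ z := by
    simpa using isHermitian_one.ofReal_re_dotProduct_mulVec z
  have hh : h = ((β / γ : ℝ) : ℂ) := by
    rw [Complex.ofReal_div, hA.1.ofReal_re_dotProduct_mulVec, hβreal]
  have hγ : 0 ≤ γ := hA.posSemidef.re_dotProduct_nonneg z
  have hβ : γ = 0 → β = 0 := fun hγ0 =>
    le_antisymm (by nlinarith [hlow z]) (dotProduct_star_self_nonneg z).1
  have hkey : lmin * lmax * (star e ⬝ᵥ A *ᵥ e).re + γ ≤ (lmin + lmax) * β := by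
    simpa only [← hz] using hA.posSemidef.kantorovich_moment_le hlow hhigh e
  have herr : (star (xstar - x) ⬝ᵥ A *ᵥ (xstar - x)).re
      = (star e ⬝ᵥ A *ᵥ e).re - 2 * (β / γ) * β + (β / γ) ^ 2 * γ := by
    rw [show xstar - x = e - ((β / γ : ℝ) : ℂ) • A *ᵥ e by rw [← hz, ← hh, sub_add_eq_sub_sub],
      hA.1.re_dotProduct_sub_smul_mulVec, ← hz]
  constructor
  · calc Real.sqrt (star (xstar - x) ⬝ᵥ A *ᵥ (xstar - x)).re
        ≤ Real.sqrt (((lmax - lmin) / (lmax + lmin)) ^ 2 * (star e ⬝ᵥ A *ᵥ e).re) := by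
          rw [herr, add_comm lmax]
          exact Real.sqrt_le_sqrt ((quadratic_at_div_le hγ hβ _).trans
            (quadratic_at_two_div_add_le (by linarith) hkey))
      _ = (lmax - lmin) / (lmax + lmin) * Real.sqrt (star e ⬝ᵥ A *ᵥ e).re := by
          rw [Real.sqrt_mul (sq_nonneg _), Real.sqrt_sq (div_nonneg (by linarith) (by linarith))]
  · rw [div_lt_one (by linarith)]
    linarith

/-- Kantorovich bound for one steepest descent step: with spectrum of `A` in
`[lmin, lmax]`, the optimal step `x = t + h z`, `h = (z,z)/(z,Az)`, satisfies
`‖x⋆ − x‖_A ≤ Ω(A) ‖x⋆ − t‖_A` with `Ω(A) = (lmax − lmin)/(lmax + lmin) < 1`. -/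
theorem steepest_descent_kantorovich
    (n : ℕ) (A : Matrix (Fin n) (Fin n) ℂ)
    (hA : A.PosDef)
    (lmin lmax : ℝ) (hlmin : 0 < lmin) (hle : lmin ≤ lmax)
    (hlow : ∀ v : Fin n → ℂ, lmin * (star v ⬝ᵥ v).re ≤ (star v ⬝ᵥ A *ᵥ v).re)
    (hhigh : ∀ v : Fin n → ℂ, (star v ⬝ᵥ A *ᵥ v).re ≤ lmax * (star v ⬝ᵥ v).re)
    (y xstar t : Fin n → ℂ)
    (hxstar : A *ᵥ xstar = y)
    (hne : t ≠ xstar) :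
    let z := y - A *ᵥ t
    let h := (star z ⬝ᵥ z) / (star z ⬝ᵥ A *ᵥ z)
    let x := t + h • z
    Real.sqrt (star (xstar - x) ⬝ᵥ A *ᵥ (xstar - x)).re
      ≤ (lmax - lmin) / (lmax + lmin)
        * Real.sqrt (star (xstar - t) ⬝ᵥ A *ᵥ (xstar - t)).re ∧
    (lmax - lmin) / (lmax + lmin) < 1 :=
  steepest_descent_kantorovich_general n A hA lmin lmax hlmin hle hlow hhigh y xstar t hxstar
end

section
/- Two-dimensional AMEn progress estimate: Let A be Hermitian positive definite, x⋆ = A^{-1} y, and let t, u be vectors with ‖x⋆ − u‖_A ≤ ‖x⋆ − t‖_A and u ≠ x⋆. Let Z, X be full-column-rank matrices with u ∈ span(X) and span(Z) ⊆ span(X), and let x = X (X* A X)^{-1} X* y. Then ‖x⋆ − x‖_A² / ‖x⋆ − t‖_A² = μ² ω_X² with μ = ‖x⋆ − u‖_A/‖x⋆ − t‖_A ≤ 1 and ω_X² = 1 − (x⋆−u, R_X(x⋆−u))_A/‖x⋆−u‖_A², and moreover ω_X ≤ ω_Z where ω_Z² = 1 − (x⋆−u, R_Z(x⋆−u))_A/‖x⋆−u‖_A².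 -/
/-!
`R_Z` and `R_X` are `A`-orthogonal projectors with `R_X R_Z = R_Z`, since `span Z ⊆ span X`.
For `A`-orthogonal projectors with `P Q = Q` the `A`-energy of `(P - Q) c` is
`⟪c, P c⟫_A - ⟪c, Q c⟫_A`, so along the chain `0, R_Z, R_X, 1` the quantities
`⟪c, R c⟫_A` increase. Since the Galerkin solution reproduces `u ∈ span X`, we have
`x⋆ - x = (1 - R_X) c` with `c = x⋆ - u`, whose energy is `‖c‖²_A - ⟪c, R_X c⟫_A = ‖c‖²_A ω_X²`.
-/

open Matrix
open scoped ComplexOrder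

namespace Matrix

variable {ι κ κ' 𝕜 : Type*} [Fintype ι] [Fintype κ] [DecidableEq κ] [RCLike 𝕜]

noncomputable def galerkinProj (A : Matrix ι ι 𝕜) (S : Matrix ι κ 𝕜) : Matrix ι ι 𝕜 :=
  S * (Sᴴ * A * S)⁻¹ * Sᴴ * A

/-- `P` is an orthogonal projector for the inner product `⟪v, w⟫_A = star v ⬝ᵥ A *ᵥ w`. -/
structure IsAOrthProj (A P : Matrix ι ι 𝕜) : Prop where
  conjTranspose_mul_eq : Pᴴ * A = A * P
  mul_self : P * P = P

lemma IsAOrthProj.zero (A : Matrix ι ι 𝕜) : IsAOrthProj A 0 :=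
  ⟨by simp, by simp⟩

lemma IsAOrthProj.one [DecidableEq ι] (A : Matrix ι ι 𝕜) : IsAOrthProj A 1 :=
  ⟨by simp, by simp⟩

lemma galerkinProj_mul_of_eq_mul (A : Matrix ι ι 𝕜) (S : Matrix ι κ 𝕜)
    [Invertible (Sᴴ * A * S)] {T : Matrix ι κ' 𝕜} {M : Matrix κ κ' 𝕜} (hT : T = S * M) :
    galerkinProj A S * T = T := by
  calc galerkinProj A S * T = S * ((Sᴴ * A * S)⁻¹ * (Sᴴ * A * S)) * M := by
        simp only [galerkinProj, hT, Matrix.mul_assoc]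
    _ = T := by rw [inv_mul_of_invertible, Matrix.mul_one, hT]

lemma galerkinProj_mul_galerkinProj_of_eq_mul [Fintype κ'] [DecidableEq κ'] (A : Matrix ι ι 𝕜)
    (S : Matrix ι κ 𝕜) [Invertible (Sᴴ * A * S)] {T : Matrix ι κ' 𝕜} {M : Matrix κ κ' 𝕜}
    (hT : T = S * M) : galerkinProj A S * galerkinProj A T = galerkinProj A T := by
  rw [galerkinProj, galerkinProj, ← Matrix.mul_assoc, ← Matrix.mul_assoc, ← Matrix.mul_assoc,
    ← galerkinProj, galerkinProj_mul_of_eq_mul A S hT]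

lemma conjTranspose_galerkinProj_mul {A : Matrix ι ι 𝕜} (hA : A.IsHermitian)
    (S : Matrix ι κ 𝕜) : (galerkinProj A S)ᴴ * A = A * galerkinProj A S := by
  simp only [galerkinProj, conjTranspose_mul, conjTranspose_nonsing_inv, hA.eq,
    conjTranspose_conjTranspose, Matrix.mul_assoc]

lemma isAOrthProj_galerkinProj {A : Matrix ι ι 𝕜} (hA : A.IsHermitian) (S : Matrix ι κ 𝕜)
    [Invertible (Sᴴ * A * S)] : IsAOrthProj A (galerkinProj A S) :=
  ⟨conjTranspose_galerkinProj_mul hA S,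
    galerkinProj_mul_galerkinProj_of_eq_mul A S (Matrix.mul_one S).symm⟩

lemma IsAOrthProj.conjTranspose_sub_mul_sub {A P Q : Matrix ι ι 𝕜} (hP : IsAOrthProj A P)
    (hQ : IsAOrthProj A Q) (hPQ : P * Q = Q) :
    (P - Q)ᴴ * A * (P - Q) = A * (P - Q) := by
  have hQP : A * (Q * P) = A * Q := by
    rw [← Matrix.mul_assoc, ← hQ.conjTranspose_mul_eq, Matrix.mul_assoc,
      ← hP.conjTranspose_mul_eq, ← Matrix.mul_assoc, ← conjTranspose_mul, hPQ]
  rw [conjTranspose_sub, sub_mul, hP.conjTranspose_mul_eq, hQ.conjTranspose_mul_eq, ← mul_sub,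
    Matrix.mul_assoc]
  simp only [sub_mul, mul_sub, hP.mul_self, hQ.mul_self, hPQ, hQP]
  abel

lemma star_mulVec_dotProduct_mulVec (A M : Matrix ι ι 𝕜) (v w : ι → 𝕜) :
    star (M *ᵥ v) ⬝ᵥ A *ᵥ (M *ᵥ w) = star v ⬝ᵥ (Mᴴ * A * M) *ᵥ w := by
  rw [star_mulVec, ← dotProduct_mulVec, mulVec_mulVec, mulVec_mulVec]

lemma IsAOrthProj.energy_sub_mulVec {A P Q : Matrix ι ι 𝕜} (hP : IsAOrthProj A P)
    (hQ : IsAOrthProj A Q) (hPQ : P * Q = Q) (v : ι → 𝕜) :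
    star ((P - Q) *ᵥ v) ⬝ᵥ A *ᵥ ((P - Q) *ᵥ v)
      = star v ⬝ᵥ A *ᵥ (P *ᵥ v) - star v ⬝ᵥ A *ᵥ (Q *ᵥ v) := by
  rw [star_mulVec_dotProduct_mulVec, hP.conjTranspose_sub_mul_sub hQ hPQ, ← mulVec_mulVec,
    sub_mulVec, mulVec_sub, dotProduct_sub]

lemma IsAOrthProj.re_dotProduct_mulVec_le {A P Q : Matrix ι ι 𝕜} (hA : A.PosSemidef)
    (hP : IsAOrthProj A P) (hQ : IsAOrthProj A Q) (hPQ : P * Q = Q) (v : ι → 𝕜) :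
    RCLike.re (star v ⬝ᵥ A *ᵥ (Q *ᵥ v)) ≤ RCLike.re (star v ⬝ᵥ A *ᵥ (P *ᵥ v)) := by
  have := hA.re_dotProduct_nonneg ((P - Q) *ᵥ v)
  rw [hP.energy_sub_mulVec hQ hPQ, map_sub] at this
  linarith

end Matrix

lemma sub_div_eq_sqrt_div_sqrt_sq_mul_sqrt_one_sub_div_sq {p q d : ℝ} (hq : 0 ≤ q) (hqp : q ≤ p)
    (hd : 0 ≤ d) : (p - q) / d = (√p / √d) ^ 2 * √(1 - q / p) ^ 2 := by
  rcases (hq.trans hqp).eq_or_lt with rfl | hp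
  · simp [le_antisymm hqp hq]
  rw [div_pow, Real.sq_sqrt hp.le, Real.sq_sqrt hd,
    Real.sq_sqrt (sub_nonneg.2 (div_le_one_of_le₀ hqp hp.le))]
  field_simp

theorem amen_two_dimensional_progress_general
    (n rz rx : ℕ) (A : Matrix (Fin n) (Fin n) ℂ)
    (Z : Matrix (Fin n) (Fin rz) ℂ) (X : Matrix (Fin n) (Fin rx) ℂ)
    (hA : A.PosDef)
    (hInvZ : Invertible (Zᴴ * A * Z))
    (hInvX : Invertible (Xᴴ * A * X))
    (hspan : ∃ M : Matrix (Fin rx) (Fin rz) ℂ, Z = X * M)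
    (y xstar t u : Fin n → ℂ)
    (hxstar : A *ᵥ xstar = y)
    (hu : ∃ s : Fin rx → ℂ, u = X *ᵥ s)
    (hprog : Real.sqrt (star (xstar - u) ⬝ᵥ A *ᵥ (xstar - u)).re
      ≤ Real.sqrt (star (xstar - t) ⬝ᵥ A *ᵥ (xstar - t)).re) :
    let RZ := Z * (Zᴴ * A * Z)⁻¹ * Zᴴ * A
    let RX := X * (Xᴴ * A * X)⁻¹ * Xᴴ * A
    let x := X *ᵥ ((Xᴴ * A * X)⁻¹ *ᵥ (Xᴴ *ᵥ y))
    let c := xstar - u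
    let mu := Real.sqrt (star c ⬝ᵥ A *ᵥ c).re
      / Real.sqrt (star (xstar - t) ⬝ᵥ A *ᵥ (xstar - t)).re
    let omX := Real.sqrt (1 - (star c ⬝ᵥ A *ᵥ (RX *ᵥ c)).re / (star c ⬝ᵥ A *ᵥ c).re)
    let omZ := Real.sqrt (1 - (star c ⬝ᵥ A *ᵥ (RZ *ᵥ c)).re / (star c ⬝ᵥ A *ᵥ c).re)
    (star (xstar - x) ⬝ᵥ A *ᵥ (xstar - x)).re
        / (star (xstar - t) ⬝ᵥ A *ᵥ (xstar - t)).re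
      = mu ^ 2 * omX ^ 2 ∧
    mu ≤ 1 ∧ omX ≤ omZ := by
  intro RZ RX x c mu omX omZ
  obtain ⟨M, hM⟩ := hspan
  obtain ⟨s, hs⟩ := hu
  have hRX : IsAOrthProj A RX := isAOrthProj_galerkinProj hA.isHermitian X
  have hRZ : IsAOrthProj A RZ := isAOrthProj_galerkinProj hA.isHermitian Z
  have hx : xstar - x = (1 - RX) *ᵥ c := by
    have hRXX : RX * X = X := galerkinProj_mul_of_eq_mul A X (Matrix.mul_one X).symm
    have hRXu : RX *ᵥ u = u := by rw [hs, mulVec_mulVec, hRXX]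
    have hxRX : x = RX *ᵥ xstar := by
      simp only [x, RX, ← hxstar, mulVec_mulVec, Matrix.mul_assoc]
    rw [hxRX, sub_mulVec, one_mulVec, mulVec_sub, hRXu]
    simp only [c]
    abel
  have hres : star (xstar - x) ⬝ᵥ A *ᵥ (xstar - x)
      = star c ⬝ᵥ A *ᵥ c - star c ⬝ᵥ A *ᵥ (RX *ᵥ c) := by
    rw [hx, (IsAOrthProj.one A).energy_sub_mulVec hRX (Matrix.one_mul RX), one_mulVec]
  have hA' := hA.posSemidef
  have hRX_nonneg := hRX.re_dotProduct_mulVec_le hA' (IsAOrthProj.zero A) (Matrix.mul_zero RX) c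
  have hRX_le := (IsAOrthProj.one A).re_dotProduct_mulVec_le hA' hRX (Matrix.one_mul RX) c
  have hRZ_le := hRX.re_dotProduct_mulVec_le hA' hRZ
    (galerkinProj_mul_galerkinProj_of_eq_mul A X hM) c
  simp only [zero_mulVec, mulVec_zero, dotProduct_zero, one_mulVec, map_zero,
    RCLike.re_to_complex] at hRX_nonneg hRX_le hRZ_le
  refine ⟨?_, div_le_one_of_le₀ hprog (Real.sqrt_nonneg _), ?_⟩
  · rw [hres, Complex.sub_re]
    exact sub_div_eq_sqrt_div_sqrt_sq_mul_sqrt_one_sub_div_sq hRX_nonneg hRX_le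
      (hA'.re_dotProduct_nonneg _)
  · exact Real.sqrt_le_sqrt
      (sub_le_sub_left (div_le_div_of_nonneg_right hRZ_le (hA'.re_dotProduct_nonneg c)) 1)

/-- Two-dimensional AMEn progress estimate:
`‖x⋆ − x‖_A²/‖x⋆ − t‖_A² = μ² ω_X²` with `μ ≤ 1` and `ω_X ≤ ω_Z`. -/
theorem amen_two_dimensional_progress
    (n rz rx : ℕ) (A : Matrix (Fin n) (Fin n) ℂ)
    (Z : Matrix (Fin n) (Fin rz) ℂ) (X : Matrix (Fin n) (Fin rx) ℂ)
    (hA : A.PosDef)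
    (hZ : Function.Injective Z.mulVec)
    (hX : Function.Injective X.mulVec)
    (hInvZ : Invertible (Zᴴ * A * Z))
    (hInvX : Invertible (Xᴴ * A * X))
    (hspan : ∃ M : Matrix (Fin rx) (Fin rz) ℂ, Z = X * M)
    (y xstar t u : Fin n → ℂ)
    (hxstar : A *ᵥ xstar = y)
    (hu : ∃ s : Fin rx → ℂ, u = X *ᵥ s)
    (hprog : Real.sqrt (star (xstar - u) ⬝ᵥ A *ᵥ (xstar - u)).re
      ≤ Real.sqrt (star (xstar - t) ⬝ᵥ A *ᵥ (xstar - t)).re)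
    (hne : u ≠ xstar) :
    let RZ := Z * (Zᴴ * A * Z)⁻¹ * Zᴴ * A
    let RX := X * (Xᴴ * A * X)⁻¹ * Xᴴ * A
    let x := X *ᵥ ((Xᴴ * A * X)⁻¹ *ᵥ (Xᴴ *ᵥ y))
    let c := xstar - u
    let mu := Real.sqrt (star c ⬝ᵥ A *ᵥ c).re
      / Real.sqrt (star (xstar - t) ⬝ᵥ A *ᵥ (xstar - t)).re
    let omX := Real.sqrt (1 - (star c ⬝ᵥ A *ᵥ (RX *ᵥ c)).re / (star c ⬝ᵥ A *ᵥ c).re)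
    let omZ := Real.sqrt (1 - (star c ⬝ᵥ A *ᵥ (RZ *ᵥ c)).re / (star c ⬝ᵥ A *ᵥ c).re)
    (star (xstar - x) ⬝ᵥ A *ᵥ (xstar - x)).re
        / (star (xstar - t) ⬝ᵥ A *ᵥ (xstar - t)).re
      = mu ^ 2 * omX ^ 2 ∧
    mu ≤ 1 ∧ omX ≤ omZ :=
  amen_two_dimensional_progress_general n rz rx A Z X hA hInvZ hInvX hspan y xstar t u hxstar hu
    hprog
end
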